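/- arXiv:1904.06838 — 3 statements merged into one kernel-verified Lean document; each statement's English description precedes it below -/
import Mathlib

section
/- Let ρ be a density matrix on C^N ⊗ C^M in normal form, i.e., with maximally mixed marginals Tr_B[ρ] = 𝟙/N and Tr_A[ρ] = 𝟙/M. Let {λ_μ}_{μ=1}^{N²−1} and {σ_ν}_{ν=1}^{M²−1} be traceless Hermitian matrices with Tr(λ_μ λ_{μ'}) = 2δ_{μμ'} and Tr(σ_ν σ_{ν'}) = 2δ_{νν'}, and define the correlation matrix T by T_{μν} = Tr[ρ (λ_μ ⊗ σ_ν)]. If the square of the Ky Fan norm of T (the sum of all singular values of T) satisfies ‖T‖²_KF > 4(N−1)(M−1)/(NM), then ρ is entangled. -/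
open scoped Kronecker ComplexConjugate ComplexOrder Matrix

noncomputable section

/-- A density matrix: positive semidefinite with trace 1. -/
def IsDensity {n : Type} [Fintype n] [DecidableEq n] (ρ : Matrix n n ℂ) : Prop :=
  ρ.PosSemidef ∧ ρ.trace = 1

/-- Separability of a bipartite density matrix: a finite convex combination of
tensor (Kronecker) products of density matrices. -/
def Separable {n m : Type} [Fintype n] [DecidableEq n] [Fintype m] [DecidableEq m]
    (ρ : Matrix (n × m) (n × m) ℂ) : Prop :=
  ∃ (L : ℕ) (p : Fin L → ℝ) (A : Fin L → Matrix n n ℂ) (B : Fin L → Matrix m m ℂ),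
    (∀ i, 0 < p i) ∧ (∑ i, p i) = 1 ∧ (∀ i, IsDensity (A i)) ∧ (∀ i, IsDensity (B i)) ∧
    ρ = ∑ i, (p i : ℂ) • (A i ⊗ₖ B i)

/-- Partial trace over the first tensor factor. -/
def ptraceFst {k n : Type} [Fintype k] (ρ : Matrix (k × n) (k × n) ℂ) : Matrix n n ℂ :=
  fun i j => ∑ a, ρ (a, i) (a, j)

/-- Partial trace over the second tensor factor. -/
def ptraceSnd {n m : Type} [Fintype m] (ρ : Matrix (n × m) (n × m) ℂ) : Matrix n n ℂ :=
  fun i j => ∑ b, ρ (i, b) (j, b)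

/-- The rank-one projection |ψ⟩⟨ψ|. -/
def proj {n : Type} (ψ : n → ℂ) : Matrix n n ℂ := Matrix.vecMulVec ψ (star ψ)

/-- Partial transpose with respect to the first tensor factor. -/
def ptransposeFst {n m : Type} (ρ : Matrix (n × m) (n × m) ℂ) : Matrix (n × m) (n × m) ℂ :=
  fun x y => ρ (y.1, x.2) (x.1, y.2)

/-- The positive semidefinite square root of a positive semidefinite matrix
(the definition of `Matrix.PosSemidef.sqrt` in the older Mathlib, since removed). -/
def posSemidefSqrt {n 𝕜 : Type*} [Fintype n] [DecidableEq n] [RCLike 𝕜] {A : Matrix n n 𝕜}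
    (hA : A.PosSemidef) : Matrix n n 𝕜 :=
  hA.1.eigenvectorUnitary.1 * Matrix.diagonal ((↑) ∘ (√·) ∘ hA.1.eigenvalues) *
  (star hA.1.eigenvectorUnitary : Matrix n n 𝕜)

/-- The Ky Fan norm of a real matrix: the sum of its singular values, `Tr √(Tᵀ T)`. -/
def kyFanNorm {a b : Type} [Fintype a] [DecidableEq a] [Fintype b] [DecidableEq b]
    (T : Matrix a b ℝ) : ℝ :=
  (posSemidefSqrt (Matrix.posSemidef_conjTranspose_mul_self T)).trace

/-! A separable `ρ = ∑ pᵢ Aᵢ ⊗ Bᵢ` has correlation matrix `T = ∑ pᵢ aᵢ bᵢᵀ`, where `aᵢ`, `bᵢ` are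
the Bloch vectors `Tr (Aᵢ λ_μ)`, `Tr (Bᵢ σ_ν)`. Bessel's inequality for the trace form, applied to
`Aᵢ - 𝟙/N`, together with `Tr Aᵢ² ≤ 1` gives `‖aᵢ‖² ≤ 2 - 2/N`, and likewise `‖bᵢ‖² ≤ 2 - 2/M`.
The polar decomposition of `T` yields a contraction `O` with `‖T‖_KF = Tr (Oᵀ T)
= ∑ pᵢ ⟨aᵢ, O bᵢ⟩`, which Cauchy–Schwarz bounds by `√((2 - 2/N)(2 - 2/M))`, and
`(2 - 2/N)(2 - 2/M) = 4(N-1)(M-1)/(NM)`. -/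

open Matrix

section UnitaryConj

variable {n R : Type*} [Fintype n] [DecidableEq n] [CommRing R] [StarRing R] {U : Matrix n n R}

lemma trace_conj_diagonal (hU : star U * U = 1) (f : n → R) :
    (U * diagonal f * star U).trace = ∑ i, f i := by
  rw [trace_mul_comm, ← Matrix.mul_assoc, hU, Matrix.one_mul, trace_diagonal]

lemma conj_diagonal_mul_conj_diagonal (hU : star U * U = 1) (f g : n → R) :
    U * diagonal f * star U * (U * diagonal g * star U) = U * diagonal (f * g) * star U := by
  calc U * diagonal f * star U * (U * diagonal g * star U)
      = U * diagonal f * (star U * U) * diagonal g * star U := by simp only [Matrix.mul_assoc]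
    _ = U * diagonal (f * g) * star U := by
      rw [hU, Matrix.mul_one, Matrix.mul_assoc U, diagonal_mul_diagonal]; rfl

end UnitaryConj

section RankOne

variable {a b : Type*} [Fintype a] [Fintype b]

lemma sum_sq_mulVec_le_of_posSemidef_one_sub [DecidableEq b] {O : Matrix a b ℝ}
    (hO : (1 - Oᴴ * O).PosSemidef) (y : b → ℝ) : ∑ μ, (O *ᵥ y) μ ^ 2 ≤ ∑ ν, y ν ^ 2 := by
  have h := hO.dotProduct_mulVec_nonneg y
  rw [sub_mulVec, one_mulVec, dotProduct_sub, ← mulVec_mulVec, dotProduct_mulVec, star_trivial,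
    conjTranspose_eq_transpose_of_trivial, vecMul_transpose, sub_nonneg] at h
  simpa only [dotProduct, sq] using h

lemma trace_conjTranspose_mul_vecMulVec (O : Matrix a b ℝ) (x : a → ℝ) (y : b → ℝ) :
    (Oᴴ * vecMulVec x y).trace = x ⬝ᵥ (O *ᵥ y) := by
  rw [mul_vecMulVec, trace_vecMulVec, dotProduct_mulVec, conjTranspose_eq_transpose_of_trivial,
    mulVec_transpose]

end RankOne

section KyFan

variable {a b : Type} [Fintype a] [DecidableEq a] [Fintype b] [DecidableEq b]

lemma kyFanNorm_eq_sum_sqrt_eigenvalues (T : Matrix a b ℝ) :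
    kyFanNorm T = ∑ j, √((posSemidef_conjTranspose_mul_self T).1.eigenvalues j) := by
  rw [kyFanNorm, posSemidefSqrt, trace_conj_diagonal (Unitary.coe_star_mul_self _)]
  rfl

lemma kyFanNorm_nonneg (T : Matrix a b ℝ) : 0 ≤ kyFanNorm T := by
  rw [kyFanNorm_eq_sum_sqrt_eigenvalues]
  exact Finset.sum_nonneg fun j _ => Real.sqrt_nonneg _

/-- `O = T S⁺`, with `S⁺` the pseudo-inverse of `S = √(Tᴴ T)`, is the partial isometry of the
polar decomposition `T = O S`. -/
lemma exists_contraction_trace_eq_kyFanNorm (T : Matrix a b ℝ) :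
    ∃ O : Matrix a b ℝ, (1 - Oᴴ * O).PosSemidef ∧ (Oᴴ * T).trace = kyFanNorm T := by
  set hS := (posSemidef_conjTranspose_mul_self T).1
  set V : Matrix b b ℝ := (hS.eigenvectorUnitary : Matrix b b ℝ)
  set s : b → ℝ := fun j => √(hS.eigenvalues j)
  have hV : star V * V = 1 := Unitary.coe_star_mul_self _
  have hTT : Tᴴ * T = V * diagonal (s * s) * star V := by
    have hd : s * s = RCLike.ofReal ∘ hS.eigenvalues := funext fun j =>
      Real.mul_self_sqrt ((posSemidef_conjTranspose_mul_self T).eigenvalues_nonneg j)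
    rw [hd]
    exact hS.spectral_theorem
  set P := V * diagonal s⁻¹ * star V
  have hP : Pᴴ = P := by simp [P, star_eq_conjTranspose, Matrix.mul_assoc]
  refine ⟨T * P, ?_, ?_⟩
  · have hOO : (T * P)ᴴ * (T * P) = V * diagonal (s⁻¹ * (s * s * s⁻¹)) * star V := by
      rw [conjTranspose_mul, hP, Matrix.mul_assoc, ← Matrix.mul_assoc _ T, hTT,
        conj_diagonal_mul_conj_diagonal hV, conj_diagonal_mul_conj_diagonal hV]
    have hone : (1 : Matrix b b ℝ) = V * diagonal 1 * star V := by simp [V]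
    rw [hOO, hone, ← Matrix.sub_mul, ← Matrix.mul_sub, diagonal_sub, star_eq_conjTranspose]
    refine PosSemidef.mul_mul_conjTranspose_same (posSemidef_diagonal_iff.mpr fun j => ?_) V
    rcases eq_or_ne (s j) 0 with h | h <;> simp [h]
  · rw [conjTranspose_mul, hP, Matrix.mul_assoc, hTT, conj_diagonal_mul_conj_diagonal hV,
      trace_conj_diagonal hV, kyFanNorm_eq_sum_sqrt_eigenvalues]
    refine Finset.sum_congr rfl fun j _ => ?_
    change (s j)⁻¹ * (s j * s j) = s j
    rcases eq_or_ne (s j) 0 with h | h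
    · simp [h]
    · field_simp

lemma sq_kyFanNorm_sum_smul_vecMulVec_le {ι : Type*} [Fintype ι] (p : ι → ℝ) (x : ι → a → ℝ)
    (y : ι → b → ℝ) {α β : ℝ} (hp : ∀ i, 0 ≤ p i) (hp1 : ∑ i, p i = 1)
    (hx : ∀ i, ∑ μ, x i μ ^ 2 ≤ α) (hy : ∀ i, ∑ ν, y i ν ^ 2 ≤ β) :
    kyFanNorm (∑ i, p i • vecMulVec (x i) (y i)) ^ 2 ≤ α * β := by
  set T := ∑ i, p i • vecMulVec (x i) (y i)
  obtain ⟨O, hO, hOT⟩ := exists_contraction_trace_eq_kyFanNorm T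
  obtain ⟨i₀, -⟩ := Finset.nonempty_of_sum_ne_zero (hp1 ▸ one_ne_zero : ∑ i, p i ≠ 0)
  have hα : 0 ≤ α := (Finset.sum_nonneg fun _ _ => sq_nonneg _).trans (hx i₀)
  have hβ : 0 ≤ β := (Finset.sum_nonneg fun _ _ => sq_nonneg _).trans (hy i₀)
  have hterm (i : ι) : x i ⬝ᵥ (O *ᵥ y i) ≤ √(α * β) := by
    refine (le_abs_self _).trans (Real.abs_le_sqrt ?_)
    calc (x i ⬝ᵥ (O *ᵥ y i)) ^ 2 ≤ (∑ μ, x i μ ^ 2) * ∑ μ, (O *ᵥ y i) μ ^ 2 :=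
          Finset.sum_mul_sq_le_sq_mul_sq _ _ _
      _ ≤ α * β := mul_le_mul (hx i) ((sum_sq_mulVec_le_of_posSemidef_one_sub hO _).trans (hy i))
          (Finset.sum_nonneg fun _ _ => sq_nonneg _) hα
  have hle : kyFanNorm T ≤ √(α * β) := calc
    kyFanNorm T = ∑ i, p i * (x i ⬝ᵥ (O *ᵥ y i)) := by
      simp only [← hOT, T, Matrix.mul_sum, trace_sum, Matrix.mul_smul, trace_smul,
        trace_conjTranspose_mul_vecMulVec, smul_eq_mul]
    _ ≤ ∑ i, p i * √(α * β) :=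
      Finset.sum_le_sum fun i _ => mul_le_mul_of_nonneg_left (hterm i) (hp i)
    _ = √(α * β) := by rw [← Finset.sum_mul, hp1, one_mul]
  calc kyFanNorm T ^ 2 ≤ √(α * β) ^ 2 := pow_le_pow_left₀ (kyFanNorm_nonneg T) hle 2
    _ = α * β := Real.sq_sqrt (mul_nonneg hα hβ)

end KyFan

section Bloch

variable {n ι : Type*} [Fintype n]

def blochVector (lam : ι → Matrix n n ℂ) (A : Matrix n n ℂ) (μ : ι) : ℝ :=
  (A * lam μ).trace.re

lemma ofReal_blochVector {A : Matrix n n ℂ} (hA : A.IsHermitian) {lam : ι → Matrix n n ℂ}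
    (hlamH : ∀ μ, (lam μ).IsHermitian) (μ : ι) : (blochVector lam A μ : ℂ) = (A * lam μ).trace := by
  refine Complex.conj_eq_iff_re.mp ?_
  rw [← Complex.star_def, ← trace_conjTranspose, conjTranspose_mul, hA.eq, (hlamH μ).eq,
    trace_mul_comm]

lemma re_trace_mul_self_nonneg_of_isHermitian {B : Matrix n n ℂ} (hB : B.IsHermitian) :
    0 ≤ (B * B).trace.re := by
  have h := (posSemidef_conjTranspose_mul_self B).trace_nonneg
  rw [hB.eq] at h
  exact (Complex.nonneg_iff.mp h).1

lemma sum_blochVector_sq_le_of_isHermitian [Fintype ι] [DecidableEq ι] {B : Matrix n n ℂ}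
    (hB : B.IsHermitian) (lam : ι → Matrix n n ℂ) (hlamH : ∀ μ, (lam μ).IsHermitian)
    (hlamO : ∀ μ μ', (lam μ * lam μ').trace = if μ = μ' then 2 else 0) :
    ∑ μ, blochVector lam B μ ^ 2 ≤ 2 * (B * B).trace.re := by
  set c := blochVector lam B
  have hc (μ : ι) : (B * lam μ).trace = c μ := (ofReal_blochVector hB hlamH μ).symm
  -- `C` is the orthogonal projection of `B` onto the span of the `λ_μ` for the trace form, so
  -- `0 ≤ Tr (B - C)²` is Bessel's inequality.
  set C := ∑ μ, ((c μ : ℂ) / 2) • lam μ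
  have hC : C.IsHermitian := isSelfAdjoint_sum _ fun μ _ => (hlamH μ).smul (by simp [IsSelfAdjoint])
  have hlamC (μ : ι) : (lam μ * C).trace = c μ := by
    simp [C, Matrix.mul_sum, trace_sum, hlamO]
  have hBC : (B * C).trace = ∑ μ, (c μ : ℂ) ^ 2 / 2 := by
    simp only [C, Matrix.mul_sum, trace_sum, Matrix.mul_smul, trace_smul, hc, smul_eq_mul]
    exact Finset.sum_congr rfl fun _ _ => by ring
  have hCC : (C * C).trace = ∑ μ, (c μ : ℂ) ^ 2 / 2 := by
    simp only [C, Finset.sum_mul, trace_sum, Matrix.smul_mul, trace_smul, hlamC, smul_eq_mul]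
    exact Finset.sum_congr rfl fun _ _ => by ring
  have hBCBC : ((B - C) * (B - C)).trace = (B * B).trace - ((∑ μ, c μ ^ 2 / 2 : ℝ) : ℂ) := by
    rw [Matrix.sub_mul, Matrix.mul_sub, Matrix.mul_sub, trace_sub, trace_sub, trace_sub,
      trace_mul_comm C B, hBC, hCC]
    push_cast
    ring
  have h := re_trace_mul_self_nonneg_of_isHermitian (hB.sub hC)
  rw [hBCBC, Complex.sub_re, Complex.ofReal_re, ← Finset.sum_div] at h
  linarith

end Bloch

namespace IsDensity

variable {n : Type} [Fintype n] [DecidableEq n] {A : Matrix n n ℂ}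

lemma card_pos (hA : IsDensity A) : 0 < Fintype.card n := by
  rw [Fintype.card_pos_iff]
  by_contra h
  rw [not_nonempty_iff] at h
  simpa [Matrix.trace] using hA.2

lemma re_trace_mul_self_le_one (hA : IsDensity A) : (A * A).trace.re ≤ 1 := by
  obtain ⟨hpsd, htr⟩ := hA
  set d := hpsd.1.eigenvalues
  have hU : star (hpsd.1.eigenvectorUnitary : Matrix n n ℂ) * hpsd.1.eigenvectorUnitary = 1 :=
    Unitary.coe_star_mul_self _
  have hsum : ∑ j, d j = 1 := by
    have h := hpsd.1.trace_eq_sum_eigenvalues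
    rw [htr] at h
    simpa [d] using (congrArg Complex.re h).symm
  have hAA : (A * A).trace = ∑ j, ((d j ^ 2 : ℝ) : ℂ) := by
    rw [hpsd.1.spectral_theorem, Unitary.conjStarAlgAut_apply,
      conj_diagonal_mul_conj_diagonal hU, trace_conj_diagonal hU]
    simp [sq, d]
  rw [hAA, ← Complex.ofReal_sum, Complex.ofReal_re, ← hsum]
  refine Finset.sum_le_sum fun j _ => sq_le (hpsd.eigenvalues_nonneg j) ?_
  exact hsum ▸ Finset.single_le_sum (fun i _ => hpsd.eigenvalues_nonneg i) (Finset.mem_univ j)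

lemma sum_blochVector_sq_le (hA : IsDensity A) {ι : Type*} [Fintype ι] [DecidableEq ι]
    (lam : ι → Matrix n n ℂ) (hlamH : ∀ μ, (lam μ).IsHermitian) (hlam0 : ∀ μ, (lam μ).trace = 0)
    (hlamO : ∀ μ μ', (lam μ * lam μ').trace = if μ = μ' then 2 else 0) :
    ∑ μ, blochVector lam A μ ^ 2 ≤ 2 - 2 / Fintype.card n := by
  set N := Fintype.card n
  have hN : (N : ℂ) ≠ 0 := by exact_mod_cast hA.card_pos.ne'
  set B := A - (N : ℂ)⁻¹ • 1
  have hB : B.IsHermitian := hA.1.1.sub (isHermitian_one.smul (by simp [IsSelfAdjoint]))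
  have hbloch : blochVector lam B = blochVector lam A := funext fun μ => by
    simp [blochVector, B, Matrix.sub_mul, trace_sub, hlam0]
  have hBB : (B * B).trace = (A * A).trace - (N : ℂ)⁻¹ := by
    simp only [B, Matrix.sub_mul, Matrix.mul_sub, Matrix.smul_mul, Matrix.mul_smul,
      Matrix.one_mul, Matrix.mul_one, trace_sub, trace_smul, trace_one, hA.2, smul_eq_mul]
    field_simp
    ring
  calc ∑ μ, blochVector lam A μ ^ 2 ≤ 2 * (B * B).trace.re :=
        hbloch ▸ sum_blochVector_sq_le_of_isHermitian hB lam hlamH hlamO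
    _ = 2 * ((A * A).trace.re - (N : ℝ)⁻¹) := by
      rw [hBB, ← Complex.ofReal_natCast, ← Complex.ofReal_inv, Complex.sub_re, Complex.ofReal_re]
    _ ≤ 2 * (1 - (N : ℝ)⁻¹) := by linarith [hA.re_trace_mul_self_le_one]
    _ = 2 - 2 / N := by ring

end IsDensity

lemma trace_sum_smul_kronecker_mul_kronecker {n m ι κ σ : Type*} [Fintype n] [Fintype m]
    [Fintype σ] (p : σ → ℝ) {A : σ → Matrix n n ℂ} {B : σ → Matrix m m ℂ}
    (hA : ∀ i, (A i).IsHermitian) (hB : ∀ i, (B i).IsHermitian) {lam : ι → Matrix n n ℂ}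
    {sig : κ → Matrix m m ℂ} (hlamH : ∀ μ, (lam μ).IsHermitian) (hsigH : ∀ ν, (sig ν).IsHermitian)
    (μ : ι) (ν : κ) :
    ((∑ i, (p i : ℂ) • (A i ⊗ₖ B i)) * (lam μ ⊗ₖ sig ν)).trace =
      (∑ i, p i • vecMulVec (blochVector lam (A i)) (blochVector sig (B i))) μ ν := by
  simp only [Matrix.sum_mul, trace_sum, Matrix.smul_mul, ← mul_kronecker_mul, trace_smul,
    trace_kronecker, ← ofReal_blochVector (hA _) hlamH, ← ofReal_blochVector (hB _) hsigH,
    Matrix.sum_apply, Matrix.smul_apply, vecMulVec_apply, smul_eq_mul]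
  push_cast
  rfl

theorem stmt4_general (N M : ℕ)
    (ρ : Matrix (Fin N × Fin M) (Fin N × Fin M) ℂ)
    (lam : Fin (N ^ 2 - 1) → Matrix (Fin N) (Fin N) ℂ)
    (sig : Fin (M ^ 2 - 1) → Matrix (Fin M) (Fin M) ℂ)
    (hlamH : ∀ μ, (lam μ).IsHermitian) (hlam0 : ∀ μ, (lam μ).trace = 0)
    (hlamO : ∀ μ μ', (lam μ * lam μ').trace = if μ = μ' then 2 else 0)
    (hsigH : ∀ ν, (sig ν).IsHermitian) (hsig0 : ∀ ν, (sig ν).trace = 0)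
    (hsigO : ∀ ν ν', (sig ν * sig ν').trace = if ν = ν' then 2 else 0)
    (T : Matrix (Fin (N ^ 2 - 1)) (Fin (M ^ 2 - 1)) ℝ)
    (hT : ∀ μ ν, (T μ ν : ℂ) = (ρ * (lam μ ⊗ₖ sig ν)).trace)
    (hKF : kyFanNorm T ^ 2 > 4 * ((N : ℝ) - 1) * ((M : ℝ) - 1) / ((N : ℝ) * M)) :
    ¬ Separable ρ := by
  rintro ⟨L, p, A, B, hp, hp1, hA, hB, rfl⟩
  have hTsum : T = ∑ i, p i • vecMulVec (blochVector lam (A i)) (blochVector sig (B i)) := by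
    ext μ ν
    exact_mod_cast (hT μ ν).trans <| trace_sum_smul_kronecker_mul_kronecker p
      (fun i => (hA i).1.1) (fun i => (hB i).1.1) hlamH hsigH μ ν
  have hKF_le := sq_kyFanNorm_sum_smul_vecMulVec_le p _ _ (fun i => (hp i).le) hp1
    (fun i => (hA i).sum_blochVector_sq_le lam hlamH hlam0 hlamO)
    (fun i => (hB i).sum_blochVector_sq_le sig hsigH hsig0 hsigO)
  rw [← hTsum, Fintype.card_fin, Fintype.card_fin] at hKF_le
  obtain ⟨i₀, -⟩ := Finset.nonempty_of_sum_ne_zero (hp1 ▸ one_ne_zero : ∑ i, p i ≠ 0)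
  have hN : (N : ℝ) ≠ 0 := by simpa using (hA i₀).card_pos.ne'
  have hM : (M : ℝ) ≠ 0 := by simpa using (hB i₀).card_pos.ne'
  have hbound :
      (2 - 2 / (N : ℝ)) * (2 - 2 / M) = 4 * ((N : ℝ) - 1) * ((M : ℝ) - 1) / (N * M) := by
    field_simp
    ring
  linarith

/-- Let `ρ` be a density matrix on `ℂ^N ⊗ ℂ^M` in normal form
(maximally mixed marginals), let `λ_μ`, `σ_ν` be traceless Hermitian matrices with
`Tr(λ_μ λ_μ') = 2δ_{μμ'}`, `Tr(σ_ν σ_ν') = 2δ_{νν'}`, and let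
`T_{μν} = Tr[ρ (λ_μ ⊗ σ_ν)]` be the correlation matrix.  If
`‖T‖²_KF > 4(N−1)(M−1)/(NM)` then `ρ` is entangled. -/
theorem stmt4 (N M : ℕ)
    (ρ : Matrix (Fin N × Fin M) (Fin N × Fin M) ℂ) (hρ : IsDensity ρ)
    (hmargA : ptraceSnd ρ = ((N : ℂ))⁻¹ • 1)
    (hmargB : ptraceFst ρ = ((M : ℂ))⁻¹ • 1)
    (lam : Fin (N ^ 2 - 1) → Matrix (Fin N) (Fin N) ℂ)
    (sig : Fin (M ^ 2 - 1) → Matrix (Fin M) (Fin M) ℂ)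
    (hlamH : ∀ μ, (lam μ).IsHermitian) (hlam0 : ∀ μ, (lam μ).trace = 0)
    (hlamO : ∀ μ μ', (lam μ * lam μ').trace = if μ = μ' then 2 else 0)
    (hsigH : ∀ ν, (sig ν).IsHermitian) (hsig0 : ∀ ν, (sig ν).trace = 0)
    (hsigO : ∀ ν ν', (sig ν * sig ν').trace = if ν = ν' then 2 else 0)
    (T : Matrix (Fin (N ^ 2 - 1)) (Fin (M ^ 2 - 1)) ℝ)
    (hT : ∀ μ ν, (T μ ν : ℂ) = (ρ * (lam μ ⊗ₖ sig ν)).trace)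
    (hKF : kyFanNorm T ^ 2 > 4 * ((N : ℝ) - 1) * ((M : ℝ) - 1) / ((N : ℝ) * M)) :
    ¬ Separable ρ :=
  stmt4_general N M ρ lam sig hlamH hlam0 hlamO hsigH hsig0 hsigO T hT hKF
end
end

section
/- If a density matrix ρ on C^N ⊗ C^M is separable, then its partial transpose ρ^{T_A} is positive semidefinite. Consequently, if ρ^{T_A} possesses at least one negative eigenvalue, then ρ is entangled; in particular, every tripartite pure state |Ψ⟩ ∈ C² ⊗ C^N ⊗ C^M whose qubit-loss residual state ρ_AB = Tr_qubit[|Ψ⟩⟨Ψ|] has a partial transpose with a negative eigenvalue is robust against the loss of the qubit. -/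
open scoped Kronecker ComplexConjugate ComplexOrder Matrix

noncomputable section

/-!
Partial transposition is linear and sends `A ⊗ B` to `Aᵀ ⊗ B`, and the transpose of a positive
semidefinite matrix is again positive semidefinite. Hence the partial transpose of a separable
state is a nonnegative combination of positive semidefinite matrices, and so it has no negative
eigenvalue.
-/

open Matrix

section PartialTranspose

variable {n m : Type}

lemma ptransposeFst_add (ρ σ : Matrix (n × m) (n × m) ℂ) :
    ptransposeFst (ρ + σ) = ptransposeFst ρ + ptransposeFst σ := rfl

lemma ptransposeFst_smul (c : ℂ) (ρ : Matrix (n × m) (n × m) ℂ) :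
    ptransposeFst (c • ρ) = c • ptransposeFst ρ := rfl

lemma ptransposeFst_sum {ι : Type} (s : Finset ι) (ρ : ι → Matrix (n × m) (n × m) ℂ) :
    ptransposeFst (∑ i ∈ s, ρ i) = ∑ i ∈ s, ptransposeFst (ρ i) :=
  map_sum (AddMonoidHom.mk' ptransposeFst ptransposeFst_add) ρ s

lemma ptransposeFst_kronecker (A : Matrix n n ℂ) (B : Matrix m m ℂ) :
    ptransposeFst (A ⊗ₖ B) = Aᵀ ⊗ₖ B := rfl

end PartialTranspose

lemma Separable.posSemidef_ptransposeFst {n m : Type} [Fintype n] [DecidableEq n] [Fintype m]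
    [DecidableEq m] {ρ : Matrix (n × m) (n × m) ℂ} (h : Separable ρ) :
    (ptransposeFst ρ).PosSemidef := by
  obtain ⟨L, p, A, B, hp, -, hA, hB, rfl⟩ := h
  rw [ptransposeFst_sum]
  refine posSemidef_sum _ fun i _ => ?_
  rw [ptransposeFst_smul, ptransposeFst_kronecker]
  exact ((hA i).1.transpose.kronecker (hB i).1).smul (Complex.zero_le_real.mpr (hp i).le)

lemma Matrix.PosSemidef.nonneg_of_mulVec_eq_smul {𝕜 n : Type} [RCLike 𝕜] [Fintype n]
    {A : Matrix n n 𝕜} (hA : A.PosSemidef) {c : 𝕜} {v : n → 𝕜} (hv : v ≠ 0)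
    (h : A *ᵥ v = c • v) : 0 ≤ c := by
  have hquad : 0 ≤ c * (star v ⬝ᵥ v) := by
    simpa [h, dotProduct_smul] using hA.dotProduct_mulVec_nonneg v
  have hnorm : 0 < star v ⬝ᵥ v := dotProduct_star_self_pos_iff.mpr hv
  simpa [hnorm.ne'] using mul_nonneg hquad (inv_nonneg.mpr hnorm.le)

/-- Every separable density matrix on `ℂ^N ⊗ ℂ^M` has a positive
semidefinite partial transpose.  Consequently any tripartite pure state
`|Ψ⟩ ∈ ℂ² ⊗ ℂ^N ⊗ ℂ^M` whose qubit-loss residual state has a partial transpose with a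
negative eigenvalue is robust against the loss of the qubit (the residual state is
entangled). -/
theorem stmt7 (N M : ℕ) :
    (∀ ρ : Matrix (Fin N × Fin M) (Fin N × Fin M) ℂ,
      IsDensity ρ → Separable ρ → (ptransposeFst ρ).PosSemidef) ∧
    (∀ Ψ : Fin 2 × (Fin N × Fin M) → ℂ, (∑ x, ‖Ψ x‖ ^ 2 = 1) →
      (∃ (c : ℝ) (v : Fin N × Fin M → ℂ), c < 0 ∧ v ≠ 0 ∧
        (ptransposeFst (ptraceFst (proj Ψ))).mulVec v = (c : ℂ) • v) →
      ¬ Separable (ptraceFst (proj Ψ))) := by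
  refine ⟨fun ρ _ hsep => hsep.posSemidef_ptransposeFst, ?_⟩
  rintro Ψ - ⟨c, v, hc, hv, heig⟩ hsep
  have hc' := hsep.posSemidef_ptransposeFst.nonneg_of_mulVec_eq_smul hv heig
  exact (Complex.zero_le_real.mp hc').not_gt hc
end
end

section
/- Let |ψ⟩ = (1/2)(|0,1,0⟩ + |0,0,1⟩ + |1,1,2⟩ + |1,2,1⟩) ∈ C² ⊗ C³ ⊗ C³ and let ρ^{AB} = Tr_qubit[|ψ⟩⟨ψ|] = (1/4)(|10⟩⟨10| + |10⟩⟨01| + |01⟩⟨10| + |01⟩⟨01| + |12⟩⟨12| + |12⟩⟨21| + |21⟩⟨12| + |21⟩⟨21|) on C³ ⊗ C³. Then the partial transpose ρ^{T_A} of ρ^{AB} with respect to the first qutrit has eigenvalues {−1/(2√2), 1/(2√2), 1/4, 1/4, 1/4, 1/4, 0, 0, 0}; in particular ρ^{T_A} has a negative eigenvalue. -/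
open scoped Kronecker ComplexConjugate ComplexOrder Matrix

noncomputable section

/-- The ket-bra |v⟩⟨w|. -/
def ketbra {n : Type} (v w : n → ℂ) : Matrix n n ℂ := Matrix.vecMulVec v (star w)

/-- Standard basis vector |a,i,j⟩ of ℂ² ⊗ ℂ³ ⊗ ℂ³. -/
def ket233 (a : Fin 2) (i j : Fin 3) : Fin 2 × (Fin 3 × Fin 3) → ℂ :=
  fun x => if x = (a, (i, j)) then 1 else 0

/-- Standard basis vector |i,j⟩ of ℂ³ ⊗ ℂ³. -/
def ket33 (i j : Fin 3) : Fin 3 × Fin 3 → ℂ :=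
  fun x => if x = (i, j) then 1 else 0


open Polynomial in
private lemma ite_ite_mul' (P Q : Prop) [Decidable P] [Decidable Q] :
    (if P then (if Q then (1:ℂ) else 0) else 0) = (if Q then (1:ℂ) else 0) * (if P then 1 else 0) := by
  split_ifs <;> norm_num

def eIdx : Fin 3 × Fin 3 ≃ (Fin 3 ⊕ Fin 6) where
  toFun x :=
    if x = (0,0) then .inl 0 else if x = (1,1) then .inl 1 else if x = (2,2) then .inl 2
    else if x = (1,0) then .inr 0 else if x = (0,1) then .inr 1 else if x = (1,2) then .inr 2
    else if x = (2,1) then .inr 3 else if x = (0,2) then .inr 4 else .inr 5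
  invFun s :=
    if s = .inl 0 then (0,0) else if s = .inl 1 then (1,1) else if s = .inl 2 then (2,2)
    else if s = .inr 0 then (1,0) else if s = .inr 1 then (0,1) else if s = .inr 2 then (1,2)
    else if s = .inr 3 then (2,1) else if s = .inr 4 then (0,2) else (2,0)
  left_inv := by decide
  right_inv := by decide

def Bmat : Matrix (Fin 3) (Fin 3) ℂ := !![0, 1/4, 0; 1/4, 0, 1/4; 0, 1/4, 0]
def dvec : Fin 6 → ℂ := fun i => if (i:ℕ) < 4 then 1/4 else 0
def Nmat : Matrix (Fin 3 ⊕ Fin 6) (Fin 3 ⊕ Fin 6) ℂ :=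
  Matrix.fromBlocks Bmat 0 0 (Matrix.diagonal dvec)

open Polynomial in
private lemma hBmat : Bmat.charpoly = X^3 - Polynomial.C (1/8 : ℂ) * X := by
  have key : (C (1/4:ℂ))^2 * 2 = C (1/8) := by
    rw [← map_pow, show ((2:ℂ[X]) = C 2) from (map_ofNat C 2).symm, ← map_mul]
    norm_num
  rw [Matrix.charpoly, Matrix.det_fin_three]
  simp [Matrix.charmatrix_apply, Matrix.diagonal_apply, Bmat]
  ring_nf
  rw [← key]
  ring

open Polynomial in
private lemma hDvec : (Matrix.diagonal dvec).charpoly = (X - Polynomial.C (1/4 : ℂ))^4 * X^2 := by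
  have h : (Matrix.diagonal dvec).charmatrix =
      Matrix.diagonal (fun i => (X : ℂ[X]) - Polynomial.C (dvec i)) := by
    ext i j
    by_cases h : i = j
    · subst h; simp
    · simp [Matrix.charmatrix_apply_ne _ _ _ h, Matrix.diagonal_apply_ne _ h]
  rw [Matrix.charpoly, h, Matrix.det_diagonal, Fin.prod_univ_six]
  simp +decide [dvec]
  ring

set_option maxHeartbeats 2000000 in
/-- For `|ψ⟩ = (|0,1,0⟩+|0,0,1⟩+|1,1,2⟩+|1,2,1⟩)/2 ∈ ℂ²⊗ℂ³⊗ℂ³`, the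
qubit-loss residual state is
`ρ^{AB} = (1/4)(|10⟩⟨10|+|10⟩⟨01|+|01⟩⟨10|+|01⟩⟨01|+|12⟩⟨12|+|12⟩⟨21|+|21⟩⟨12|+|21⟩⟨21|)`,
and its partial transpose with respect to the first qutrit has eigenvalues
`{−1/(2√2), 1/(2√2), 1/4, 1/4, 1/4, 1/4, 0, 0, 0}` (stated via the characteristic
polynomial); in particular it has a negative eigenvalue. -/
theorem stmt9
    (ψ : Fin 2 × (Fin 3 × Fin 3) → ℂ)
    (hψ : ψ = fun x => (1 / 2 : ℂ) *
      (ket233 0 1 0 x + ket233 0 0 1 x + ket233 1 1 2 x + ket233 1 2 1 x))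
    (ρAB : Matrix (Fin 3 × Fin 3) (Fin 3 × Fin 3) ℂ) (hρAB : ρAB = ptraceFst (proj ψ))
    (pt : Matrix (Fin 3 × Fin 3) (Fin 3 × Fin 3) ℂ) (hpt : pt = ptransposeFst ρAB) :
    ρAB = (1 / 4 : ℂ) •
      (ketbra (ket33 1 0) (ket33 1 0) + ketbra (ket33 1 0) (ket33 0 1) +
       ketbra (ket33 0 1) (ket33 1 0) + ketbra (ket33 0 1) (ket33 0 1) +
       ketbra (ket33 1 2) (ket33 1 2) + ketbra (ket33 1 2) (ket33 2 1) +
       ketbra (ket33 2 1) (ket33 1 2) + ketbra (ket33 2 1) (ket33 2 1)) ∧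
    pt.charpoly =
      (Polynomial.X - Polynomial.C (-(1 / (2 * (Real.sqrt 2 : ℂ))))) *
      (Polynomial.X - Polynomial.C (1 / (2 * (Real.sqrt 2 : ℂ)))) *
      (Polynomial.X - Polynomial.C (1 / 4 : ℂ)) ^ 4 *
      Polynomial.X ^ 3 ∧
    (∃ (c : ℝ) (v : Fin 3 × Fin 3 → ℂ), c < 0 ∧ v ≠ 0 ∧
      pt.mulVec v = (c : ℂ) • v) := by
  open Polynomial in
  have hs0 : (0:ℝ) < Real.sqrt 2 := Real.sqrt_pos.mpr (by norm_num)
  have h2 : ((Real.sqrt 2 : ℝ) : ℂ) * ((Real.sqrt 2:ℝ):ℂ) = 2 := by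
    norm_cast
    exact Real.mul_self_sqrt (by norm_num)
  have hsne : ((Real.sqrt 2:ℝ):ℂ) ≠ 0 := by exact_mod_cast ne_of_gt hs0
  have ρ1 : ρAB = (1 / 4 : ℂ) •
      (ketbra (ket33 1 0) (ket33 1 0) + ketbra (ket33 1 0) (ket33 0 1) +
       ketbra (ket33 0 1) (ket33 1 0) + ketbra (ket33 0 1) (ket33 0 1) +
       ketbra (ket33 1 2) (ket33 1 2) + ketbra (ket33 1 2) (ket33 2 1) +
       ketbra (ket33 2 1) (ket33 1 2) + ketbra (ket33 2 1) (ket33 2 1)) := by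
    subst hψ hρAB
    funext x y
    simp only [ptraceFst, proj, ketbra, Matrix.vecMulVec_apply, Fin.sum_univ_two,
      ket233, ket33, Pi.star_apply, Matrix.smul_apply, Matrix.add_apply, Prod.mk.injEq,
      smul_eq_mul]
    norm_num [apply_ite (starRingEnd ℂ)]
    simp only [ite_ite_mul']
    ring
  have hptN : pt = Matrix.reindex eIdx.symm eIdx.symm Nmat := by
    rw [hpt, ρ1]
    funext x y
    rw [Matrix.reindex_apply, Matrix.submatrix_apply, Equiv.symm_symm]
    fin_cases x <;> fin_cases y <;>
      simp +decide [ptransposeFst, ketbra, ket33, Nmat, Bmat, dvec, eIdx,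
        Matrix.vecMulVec_apply, Matrix.fromBlocks, Prod.ext_iff]
  refine ⟨ρ1, ?_, ?_⟩
  · rw [hptN, Matrix.charpoly_reindex]
    rw [Nmat, Matrix.charpoly_fromBlocks_zero₂₁, hBmat, hDvec]
    have hCa : C (1 / (2 * ((Real.sqrt 2:ℝ):ℂ))) * C (1 / (2 * ((Real.sqrt 2:ℝ):ℂ)))
        = C ((1:ℂ)/8) := by
      rw [← map_mul]
      congr 1
      field_simp
      linear_combination (-4 : ℂ) * h2
    rw [Polynomial.C_neg]
    linear_combination (X^3 * (X - C (1/4:ℂ))^4) * hCa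
  · refine ⟨-(1/(2*Real.sqrt 2)),
      (fun x => if x = (0,0) then 1 else if x = (1,1) then -((Real.sqrt 2:ℝ):ℂ)
        else if x = (2,2) then 1 else 0), ?_, ?_, ?_⟩
    · have : 0 < 1/(2*Real.sqrt 2) := by positivity
      linarith
    · intro h
      have := congrFun h (0,0)
      simp at this
    · funext x
      rw [hpt, ρ1]
      rw [Matrix.mulVec, dotProduct, Fintype.sum_prod_type]
      simp only [Fin.sum_univ_three]
      fin_cases x <;>
        simp +decide [ptransposeFst, ketbra, ket33, Matrix.vecMulVec_apply, Prod.ext_iff] <;>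
        field_simp <;> ring_nf <;> rw [sq, h2] <;> norm_num
end
end
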